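/- arXiv:1512.01085 — 2 statements merged into one kernel-verified Lean document; each statement's English description precedes it below -/
import Mathlib

section
/- Let α be a finite alphabet, let n, m be natural numbers with m ≤ n, and let π : Fin n → α → ℝ be a weighted string, i.e., for every position i and letter a, 0 ≤ π i a, and for every i, ∑_{a ∈ α} π i a = 1. Let z ≥ 2 be a real number. Call a position k of π black if π k a ≤ 1 − 1/z for every letter a. Suppose a string u : Fin m → α occurs validly at starting position i, i.e., i + m ≤ n and ∏_{j=0}^{m−1} π (i+j) (u j) ≥ 1/z. Then the number of indices j ∈ {0, …, m−1} such that position i + j is black is at most ⌈log z / log(z/(z−1))⌉. -/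
open scoped Classical

/-- In a weighted string `π` of length `n` over a finite alphabet,
if a string `u` of length `m` occurs validly at position `i` with threshold
`1/z` (`z ≥ 2`), then the number of black positions among `i, …, i+m-1`
(positions where every letter has probability at most `1 - 1/z`) is at most
`⌈log z / log (z/(z-1))⌉`. -/
theorem stmt_1 (α : Type*) [Fintype α] (n m : ℕ) (hmn : m ≤ n)
    (π : Fin n → α → ℝ)
    (hnonneg : ∀ i a, 0 ≤ π i a)
    (hsum : ∀ i, ∑ a, π i a = 1)
    (z : ℝ) (hz : 2 ≤ z)
    (u : Fin m → α) (i : ℕ) (hin : i + m ≤ n)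
    (hvalid : 1 / z ≤ ∏ j : Fin m, π ⟨i + j.1, by have := j.2; omega⟩ (u j)) :
    ((Finset.univ.filter (fun j : Fin m =>
        ∀ a, π ⟨i + j.1, by have := j.2; omega⟩ a ≤ 1 - 1 / z)).card : ℤ)
      ≤ ⌈Real.log z / Real.log (z / (z - 1))⌉ := by
  have hz0 : (0:ℝ) < z := by linarith
  have hz1 : (0:ℝ) < z - 1 := by linarith
  set f : Fin m → ℝ := fun j => π ⟨i + j.1, by have := j.2; omega⟩ (u j) with hf
  have hf0 : ∀ j, 0 ≤ f j := fun j => hnonneg _ _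
  have hf1 : ∀ j : Fin m, f j ≤ 1 := by
    intro j
    have := Finset.single_le_sum (f := fun a => π ⟨i + j.1, by have := j.2; omega⟩ a)
      (fun a _ => hnonneg _ a) (Finset.mem_univ (u j))
    simpa [hsum] using this
  set S := Finset.univ.filter (fun j : Fin m =>
      ∀ a, π ⟨i + j.1, by have := j.2; omega⟩ a ≤ 1 - 1 / z) with hS
  -- product over S is at least product over univ
  have hsub : S ⊆ Finset.univ := Finset.subset_univ _
  have hsplit : (∏ j ∈ Finset.univ \ S, f j) * ∏ j ∈ S, f j = ∏ j : Fin m, f j :=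
    Finset.prod_sdiff hsub
  have hSnn : 0 ≤ ∏ j ∈ S, f j := Finset.prod_nonneg fun j _ => hf0 j
  have hsd1 : ∏ j ∈ Finset.univ \ S, f j ≤ 1 :=
    Finset.prod_le_one (fun j _ => hf0 j) (fun j _ => hf1 j)
  have hprodS : 1 / z ≤ ∏ j ∈ S, f j := by
    calc 1 / z ≤ ∏ j : Fin m, f j := hvalid
    _ = (∏ j ∈ Finset.univ \ S, f j) * ∏ j ∈ S, f j := hsplit.symm
    _ ≤ 1 * ∏ j ∈ S, f j := mul_le_mul_of_nonneg_right hsd1 hSnn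
    _ = ∏ j ∈ S, f j := one_mul _
  have hbound : ∏ j ∈ S, f j ≤ (1 - 1 / z) ^ S.card := by
    have : ∏ j ∈ S, f j ≤ ∏ _j ∈ S, (1 - 1 / z) := by
      apply Finset.prod_le_prod (fun j _ => hf0 j)
      intro j hj
      exact (Finset.mem_filter.mp hj).2 (u j)
    simpa using this
  have hkey : 1 / z ≤ (1 - 1 / z) ^ S.card := le_trans hprodS hbound
  have hc : (1:ℝ) - 1 / z = (z - 1) / z := by field_simp
  have hcpos : (0:ℝ) < (z - 1) / z := div_pos hz1 hz0
  have hzinv : (0:ℝ) < 1 / z := by positivity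
  have hlog := Real.log_le_log hzinv (hc ▸ hkey)
  rw [Real.log_pow, Real.log_div (ne_of_gt hz1) (ne_of_gt hz0),
    Real.log_div one_ne_zero (ne_of_gt hz0), Real.log_one] at hlog
  have hL : 0 < Real.log (z / (z - 1)) := by
    apply Real.log_pos
    rw [lt_div_iff₀ hz1]; linarith
  have hLval : Real.log (z / (z - 1)) = Real.log z - Real.log (z - 1) :=
    Real.log_div (ne_of_gt hz0) (ne_of_gt hz1)
  have hcard : (S.card : ℝ) ≤ Real.log z / Real.log (z / (z - 1)) := by
    rw [le_div_iff₀ hL, hLval]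
    nlinarith [hlog]
  calc (S.card : ℤ) = ⌈(S.card : ℝ)⌉ := by simp
  _ ≤ ⌈Real.log z / Real.log (z / (z - 1))⌉ := Int.ceil_le_ceil hcard
end

section
/- For every real number z ≥ 2, ⌈log₂ z / log₂(z/(z−1))⌉ ≤ z · log₂ z, where log₂ denotes the base-2 logarithm and ⌈·⌉ the ceiling function. -/
/-!
Put `w = z / (z - 1)`. The bound `log w ≥ 1 - w⁻¹ = z⁻¹` gives `log z / log w ≤ z log z`, and the
ratio of base-2 logarithms equals this ratio of natural ones. For `z ≥ 13/5` the slack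
`z log₂ z - z log z = z log z (1 / log 2 - 1)` exceeds `1`, which absorbs the ceiling. For
`2 ≤ z ≤ 13/5` we have `z ≤ w²`, so the ratio is at most `2 ≤ z log₂ z`.
-/

open Real

lemma inv_le_log_div_sub_one {z : ℝ} (hz : 1 < z) : z⁻¹ ≤ log (z / (z - 1)) := by
  have h := one_sub_inv_le_log_of_pos (div_pos (by linarith) (sub_pos.2 hz) : 0 < z / (z - 1))
  have hz0 : z ≠ 0 := by positivity
  rwa [inv_div, one_sub_div hz0, sub_sub_cancel, one_div] at h

lemma log_div_log_div_sub_one_le {z : ℝ} (hz : 1 < z) :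
    log z / log (z / (z - 1)) ≤ z * log z := by
  have hw : 0 < log (z / (z - 1)) :=
    lt_of_lt_of_le (inv_pos.2 (by linarith)) (inv_le_log_div_sub_one hz)
  rw [div_le_iff₀ hw]
  calc log z = z * log z * z⁻¹ := by field_simp
    _ ≤ z * log z * log (z / (z - 1)) := by
      gcongr
      · exact mul_nonneg (by linarith) (log_nonneg hz.le)
      · exact inv_le_log_div_sub_one hz

lemma log_div_log_div_sub_one_le_two {z : ℝ} (hz : 1 < z) (hz' : (z - 1) ^ 2 ≤ z) :
    log z / log (z / (z - 1)) ≤ 2 := by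
  have hz1 : 0 < z - 1 := sub_pos.2 hz
  have hw : 0 < log (z / (z - 1)) := log_pos ((one_lt_div hz1).2 (by linarith))
  have hsq : z ≤ (z / (z - 1)) ^ 2 := by
    rw [div_pow, le_div_iff₀ (by positivity)]
    nlinarith
  rw [div_le_iff₀ hw]
  calc log z ≤ log ((z / (z - 1)) ^ 2) := log_le_log (by linarith) hsq
    _ = 2 * log (z / (z - 1)) := by rw [log_pow]; norm_num

lemma mul_log_add_one_le_mul_logb_two {z : ℝ} (hz : 13 / 5 ≤ z) :
    z * log z + 1 ≤ z * logb 2 z := by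
  have hlog13 : (3 : ℝ) / 13 ≤ log (13 / 10) := by
    have := one_sub_inv_le_log_of_pos (by norm_num : (0 : ℝ) < 13 / 10)
    norm_num at this ⊢
    linarith
  have hlogz : log 2 + 3 / 13 ≤ log z := by
    have : log (2 * (13 / 10)) ≤ log z := log_le_log (by norm_num) (by linarith)
    rw [log_mul (by norm_num) (by norm_num)] at this
    linarith
  have hlo := log_two_gt_d9
  have hhi := log_two_lt_d9
  have hprod : (13 / 5 : ℝ) * (log 2 + 3 / 13) ≤ z * log z :=
    mul_le_mul hz hlogz (by linarith) (by linarith)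
  rw [← log_div_log, mul_div_assoc', le_div_iff₀ (by linarith)]
  nlinarith

/-- For every real `z ≥ 2`,
`⌈log₂ z / log₂ (z/(z−1))⌉ ≤ z · log₂ z`. -/
theorem stmt_10 (z : ℝ) (hz : 2 ≤ z) :
    (⌈Real.logb 2 z / Real.logb 2 (z / (z - 1))⌉ : ℝ) ≤ z * Real.logb 2 z := by
  have hz1 : 1 < z := by linarith
  have hratio : logb 2 z / logb 2 (z / (z - 1)) = log z / log (z / (z - 1)) := by
    simp only [← log_div_log]
    exact div_div_div_cancel_right₀ (log_pos one_lt_two).ne' _ _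
  rw [hratio]
  rcases le_or_gt z (13 / 5) with hsmall | hlarge
  · have hceil : ⌈log z / log (z / (z - 1))⌉ ≤ 2 :=
      Int.ceil_le.2 (by exact_mod_cast log_div_log_div_sub_one_le_two hz1 (by nlinarith))
    have hlogb : 1 ≤ logb 2 z := by
      simpa using logb_le_logb_of_le (b := 2) one_lt_two (by norm_num) hz
    calc (⌈log z / log (z / (z - 1))⌉ : ℝ) ≤ 2 := by exact_mod_cast hceil
      _ ≤ z * logb 2 z := by nlinarith
  · calc (⌈log z / log (z / (z - 1))⌉ : ℝ) ≤ log z / log (z / (z - 1)) + 1 :=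
          (Int.ceil_lt_add_one _).le
      _ ≤ z * log z + 1 := by gcongr; exact log_div_log_div_sub_one_le hz1
      _ ≤ z * logb 2 z := mul_log_add_one_le_mul_logb_two hlarge.le
end
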